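/- Let N ≥ 1, k ≥ 1, λ ∈ ℤ^N with λ₁ ≥ ⋯ ≥ λ_N, and let f : ℂ × ℂ → ℂ. Let x₁, …, x_{N+k−1} ∈ ℂ be pairwise distinct and nonzero, and y₁, …, y_k ∈ ℂ be pairwise distinct with y_k ≠ 0 and y_k ∉ {x₁, …, x_{N+k−1}}. Assume: (i) (x − y_k)·f(x, y_k) → 1 as x → y_k with x ≠ y_k; (ii) for each 1 ≤ j ≤ k−1, the function x ↦ f(x, y_j) is continuous at y_k. Then, in the punctured limit x_{N+k} → y_k (x_{N+k} ≠ y_k), the function s_{λ,f}(x₁, …, x_{N+k−1}, x_{N+k} / y₁, …, y_k) converges to s_{λ,f}(x₁, …, x_{N+k−1} / y₁, …, y_{k−1}), where for k = 1 the limit is interpreted as the rational Schur function s_λ(x₁, …, x_N). -/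

import Mathlib

/-!
Multiplying the last row of the determinant by `z - y_{k+1}` costs a factor `(z - y_{k+1})⁻¹`,
which the prefactor supplies: `D(x; -y)` contains `z - y_{k+1}`. As `z → y_{k+1}` the rescaled
last row tends to the unit vector at the column of `y_{k+1}`, by (i) and by (ii) together with
continuity of `w ↦ w ^ n` at `y_{k+1} ≠ 0`. Laplace expansion along that row then leaves `±` the
determinant for `(x / y₁, …, y_k)`, while the rest of the prefactor is continuous at `y_{k+1}`
and converges to `±` the prefactor for `(x / y₁, …, y_k)`; the two signs cancel.
-/

open Complex Finset Filter Topology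

noncomputable section

/-- Vandermonde product `Δ(w) = ∏_{i<j} (w i - w j)`. -/
def vprod {m : ℕ} (w : Fin m → ℂ) : ℂ :=
  ∏ i : Fin m, ∏ j : Fin m, if i < j then w i - w j else 1

/-- `D(x;y) = ∏_{i,j} (x i + y j)`. -/
def dprod {m n : ℕ} (x : Fin m → ℂ) (y : Fin n → ℂ) : ℂ :=
  ∏ i : Fin m, ∏ j : Fin n, (x i + y j)

/-- The lift `s_{λ,f}(x/y) = (-1)^{Nk} · D(x;-y)/(Δ(x)Δ(-y)) · det(F(x,y) | M_λ(x))`,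
where `F(x,y)` has entries `f(x_i, y_j)` and `M_λ(x)` has entries `x_i^{λ_j + N - j}`
(0-indexed exponent `λ_j + N - 1 - j`, integer powers).
For `k = 0` this is the rational Schur function `s_λ(x)`. -/
def schurLiftF (N k : ℕ) (lam : Fin N → ℤ) (f : ℂ → ℂ → ℂ)
    (x : Fin (N + k) → ℂ) (y : Fin k → ℂ) : ℂ :=
  (-1 : ℂ) ^ (N * k) * dprod x (fun j => -y j) /
      (vprod x * vprod fun j => -y j) *
    (Matrix.of fun i j : Fin (N + k) =>
      if h : (j : ℕ) < k then f (x i) (y ⟨j, h⟩)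
      else x i ^ (lam ⟨(j : ℕ) - k, by have := j.isLt; omega⟩ +
        (N : ℤ) - 1 - (((j : ℕ) - k : ℕ) : ℤ))).det

namespace Matrix

variable {R : Type*} [CommRing R] {n : ℕ}

theorem det_of_snoc (A : Fin n → Fin (n + 1) → R) (v : Fin (n + 1) → R) :
    (of (Fin.snoc A v : Fin (n + 1) → Fin (n + 1) → R)).det =
      ∑ j : Fin (n + 1), (-1) ^ (n + j : ℕ) * v j * (of fun i l => A i (j.succAbove l)).det := by
  rw [det_succ_row _ (Fin.last n)]
  refine sum_congr rfl fun j _ => ?_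
  simp [Fin.val_last, Fin.succAbove_last, Matrix.submatrix, Fin.snoc_castSucc]

theorem det_of_snoc_smul (A : Fin n → Fin (n + 1) → R) (c : R) (v : Fin (n + 1) → R) :
    (of (Fin.snoc A (c • v) : Fin (n + 1) → Fin (n + 1) → R)).det =
      c * (of (Fin.snoc A v : Fin (n + 1) → Fin (n + 1) → R)).det := by
  simp only [det_of_snoc, mul_sum, Pi.smul_apply, smul_eq_mul]
  exact sum_congr rfl fun j _ => by ring

theorem tendsto_det_of_snoc [TopologicalSpace R] [IsTopologicalRing R] {ι : Type*}
    {l : Filter ι} (A : Fin n → Fin (n + 1) → R) {v : ι → Fin (n + 1) → R} (c : Fin (n + 1))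
    (hv : Tendsto v l (𝓝 (Pi.single c 1))) :
    Tendsto (fun t => (of (Fin.snoc A (v t) : Fin (n + 1) → Fin (n + 1) → R)).det) l
      (𝓝 ((-1) ^ (n + c : ℕ) * (of fun i l => A i (c.succAbove l)).det)) := by
  have hlim : ∑ j : Fin (n + 1), (-1) ^ (n + j : ℕ) * (Pi.single c 1 : Fin (n + 1) → R) j *
      (of fun i l => A i (j.succAbove l)).det =
      (-1) ^ (n + c : ℕ) * (of fun i l => A i (c.succAbove l)).det := by
    rw [Fintype.sum_eq_single c fun j hj => by simp [hj]]
    simp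
  simp only [det_of_snoc, ← hlim]
  exact tendsto_finsetSum _ fun j _ =>
    ((tendsto_pi_nhds.mp hv j).const_mul _).mul_const _

end Matrix

theorem vprod_eq_vprod_init_mul {m : ℕ} (w : Fin (m + 1) → ℂ) :
    vprod w = vprod (Fin.init w) * ∏ i : Fin m, (w i.castSucc - w (Fin.last m)) := by
  unfold vprod
  rw [Fin.prod_univ_castSucc, Fintype.prod_eq_one _ fun j => if_neg (Fin.le_last j).not_gt,
    mul_one, ← prod_mul_distrib]
  refine prod_congr rfl fun i _ => ?_
  rw [Fin.prod_univ_castSucc, if_pos (Fin.castSucc_lt_last i)]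
  simp [Fin.init]

theorem vprod_snoc {m : ℕ} (x : Fin m → ℂ) (z : ℂ) :
    vprod (Fin.snoc x z : Fin (m + 1) → ℂ) = vprod x * ∏ i, (x i - z) := by
  simp [vprod_eq_vprod_init_mul]

theorem vprod_ne_zero {m : ℕ} {w : Fin m → ℂ} (hw : Function.Injective w) : vprod w ≠ 0 :=
  prod_ne_zero_iff.mpr fun i _ => prod_ne_zero_iff.mpr fun j _ => by
    split_ifs with hij
    · exact sub_ne_zero.mpr (hw.ne hij.ne)
    · exact one_ne_zero

theorem dprod_eq_dprod_init_mul {m n : ℕ} (x : Fin m → ℂ) (y : Fin (n + 1) → ℂ) :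
    dprod x y = dprod x (Fin.init y) * ∏ i, (x i + y (Fin.last n)) := by
  simp only [dprod, ← prod_mul_distrib, Fin.prod_univ_castSucc, Fin.init]

theorem dprod_snoc {m n : ℕ} (x : Fin m → ℂ) (z : ℂ) (y : Fin n → ℂ) :
    dprod (Fin.snoc x z : Fin (m + 1) → ℂ) y = dprod x y * ∏ j, (z + y j) := by
  simp [dprod, Fin.prod_univ_castSucc]

def liftRow (N k : ℕ) (lam : Fin N → ℤ) (f : ℂ → ℂ → ℂ) (y : Fin k → ℂ) (w : ℂ) :
    Fin (N + k) → ℂ := fun j =>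
  if h : (j : ℕ) < k then f w (y ⟨j, h⟩)
  else w ^ (lam ⟨(j : ℕ) - k, by omega⟩ + (N : ℤ) - 1 - (((j : ℕ) - k : ℕ) : ℤ))

def schurPrefactor (N k : ℕ) (x : Fin (N + k) → ℂ) (y : Fin k → ℂ) : ℂ :=
  (-1 : ℂ) ^ (N * k) * dprod x (fun j => -y j) / (vprod x * vprod fun j => -y j)

section

variable {N k : ℕ} (lam : Fin N → ℤ) (f : ℂ → ℂ → ℂ)

theorem schurLiftF_eq_schurPrefactor_mul_det (x : Fin (N + k) → ℂ) (y : Fin k → ℂ) :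
    schurLiftF N k lam f x y =
      schurPrefactor N k x y * (Matrix.of fun i => liftRow N k lam f y (x i)).det :=
  rfl

theorem liftRow_comp_succAbove (y : Fin (k + 1) → ℂ) (w : ℂ) :
    liftRow N (k + 1) lam f y w ∘ (⟨k, by omega⟩ : Fin (N + k + 1)).succAbove =
      liftRow N k lam f (Fin.init y) w := by
  funext j
  by_cases hj : (j : ℕ) < k
  · rw [Function.comp_apply, Fin.succAbove_of_castSucc_lt _ _ (by simpa [Fin.lt_def] using hj)]
    simp [liftRow, hj, Fin.init, Nat.lt_succ_of_lt hj]
  · rw [Function.comp_apply, Fin.succAbove_of_le_castSucc _ _ (Fin.le_def.mpr (by simp; omega))]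
    have hj' : ¬ (j : ℕ) + 1 < k + 1 := by omega
    simp [liftRow, hj, hj']

theorem tendsto_sub_smul_liftRow {y : Fin (k + 1) → ℂ} (hyk0 : y (Fin.last k) ≠ 0)
    (hf1 : Tendsto (fun z : ℂ => (z - y (Fin.last k)) * f z (y (Fin.last k)))
      (𝓝[≠] (y (Fin.last k))) (𝓝 1))
    (hf2 : ∀ j : Fin k, ContinuousAt (fun z : ℂ => f z (y j.castSucc)) (y (Fin.last k))) :
    Tendsto (fun z => (z - y (Fin.last k)) • liftRow N (k + 1) lam f y z) (𝓝[≠] (y (Fin.last k)))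
      (𝓝 (Pi.single (⟨k, by omega⟩ : Fin (N + k + 1)) 1)) := by
  have hle : 𝓝[≠] (y (Fin.last k)) ≤ 𝓝 (y (Fin.last k)) := nhdsWithin_le_nhds
  have hsub : Tendsto (fun z => z - y (Fin.last k)) (𝓝[≠] (y (Fin.last k))) (𝓝 0) :=
    tendsto_sub_nhds_zero_iff.mpr hle
  refine tendsto_pi_nhds.mpr fun j => ?_
  simp only [Pi.smul_apply, smul_eq_mul, liftRow]
  rcases lt_trichotomy (j : ℕ) k with hj | hj | hj
  · have hfj := (hf2 ⟨j, hj⟩).tendsto.mono_left hle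
    simpa [Nat.lt_succ_of_lt hj, Pi.single_apply, Fin.ext_iff, hj.ne] using hsub.mul hfj
  · have hjk : (⟨j, by omega⟩ : Fin (k + 1)) = Fin.last k := Fin.ext hj
    simp only [show (j : ℕ) < k + 1 by omega, dite_true, hjk]
    simpa [Pi.single_apply, Fin.ext_iff, hj] using hf1
  · have hpow := (continuousAt_zpow₀ (y (Fin.last k)) (lam ⟨(j : ℕ) - (k + 1), by omega⟩ +
      (N : ℤ) - 1 - (((j : ℕ) - (k + 1) : ℕ) : ℤ)) (Or.inl hyk0)).tendsto.mono_left hle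
    simpa [show ¬ (j : ℕ) < k + 1 by omega, Pi.single_apply, Fin.ext_iff, hj.ne'] using
      hsub.mul hpow

end

def snocPrefactor (N k : ℕ) (x : Fin (N + k) → ℂ) (y : Fin (k + 1) → ℂ) (z : ℂ) : ℂ :=
  (-1 : ℂ) ^ (N * (k + 1)) * (dprod x (fun j => -y j) * ∏ j : Fin k, (z - y j.castSucc)) /
    (vprod x * (∏ i, (x i - z)) * vprod fun j => -y j)

section

variable {N k : ℕ} (x : Fin (N + k) → ℂ) (y : Fin (k + 1) → ℂ)

theorem schurPrefactor_snoc (z : ℂ) :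
    schurPrefactor N (k + 1) (Fin.snoc x z) y = (z - y (Fin.last k)) * snocPrefactor N k x y z := by
  have hlast : ∏ j, (z + -y j) = (∏ j : Fin k, (z - y j.castSucc)) * (z - y (Fin.last k)) := by
    simp [Fin.prod_univ_castSucc, sub_eq_add_neg]
  rw [schurPrefactor, snocPrefactor, dprod_snoc (m := N + k), vprod_snoc (m := N + k), hlast]
  ring

theorem snocPrefactor_last (hyinj : Function.Injective y) (hyx : ∀ i, y (Fin.last k) ≠ x i) :
    snocPrefactor N k x y (y (Fin.last k)) = (-1) ^ N * schurPrefactor N k x (Fin.init y) := by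
  have hx : ∏ i, (x i - y (Fin.last k)) ≠ 0 :=
    prod_ne_zero_iff.mpr fun i _ => sub_ne_zero.mpr (hyx i).symm
  have hy : ∏ j : Fin k, (y (Fin.last k) - y j.castSucc) ≠ 0 :=
    prod_ne_zero_iff.mpr fun j _ => sub_ne_zero.mpr (hyinj.ne (Fin.castSucc_lt_last j).ne')
  rw [snocPrefactor, schurPrefactor, dprod_eq_dprod_init_mul, vprod_eq_vprod_init_mul]
  have hinit : (Fin.init fun j => -y j) = fun j => -Fin.init y j := rfl
  simp only [hinit, Fin.init, ← sub_eq_add_neg, neg_sub_neg]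
  field_simp
  ring

theorem continuousAt_snocPrefactor (hxinj : Function.Injective x) (hyinj : Function.Injective y)
    (hyx : ∀ i, y (Fin.last k) ≠ x i) : ContinuousAt (snocPrefactor N k x y) (y (Fin.last k)) := by
  refine ContinuousAt.div (by fun_prop) (by fun_prop) ?_
  have hx : ∏ i, (x i - y (Fin.last k)) ≠ 0 :=
    prod_ne_zero_iff.mpr fun i _ => sub_ne_zero.mpr (hyx i).symm
  exact mul_ne_zero (mul_ne_zero (vprod_ne_zero hxinj) hx)
    (vprod_ne_zero (neg_injective.comp hyinj))

end

theorem statement2_general (N k : ℕ) (lam : Fin N → ℤ)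
    (f : ℂ → ℂ → ℂ) (x : Fin (N + k) → ℂ) (y : Fin (k + 1) → ℂ)
    (hxinj : Function.Injective x)
    (hyinj : Function.Injective y) (hyk0 : y (Fin.last k) ≠ 0)
    (hyx : ∀ i, y (Fin.last k) ≠ x i)
    (hf1 : Tendsto (fun z : ℂ => (z - y (Fin.last k)) * f z (y (Fin.last k)))
      (𝓝[≠] (y (Fin.last k))) (𝓝 1))
    (hf2 : ∀ j : Fin k, ContinuousAt (fun z : ℂ => f z (y j.castSucc)) (y (Fin.last k))) :
    Tendsto (fun z : ℂ => schurLiftF N (k + 1) lam f (Fin.snoc x z) y)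
      (𝓝[≠] (y (Fin.last k))) (𝓝 (schurLiftF N k lam f x (Fin.init y))) := by
  let rows := fun i => liftRow N (k + 1) lam f y (x i)
  have hdet := Matrix.tendsto_det_of_snoc rows _ (tendsto_sub_smul_liftRow lam f hyk0 hf1 hf2)
  have hpre := (continuousAt_snocPrefactor x y hxinj hyinj hyx).tendsto.mono_left
    (nhdsWithin_le_nhds (s := {y (Fin.last k)}ᶜ))
  convert hpre.mul hdet using 2 with z
  · rw [schurLiftF_eq_schurPrefactor_mul_det, schurPrefactor_snoc, Matrix.det_of_snoc_smul,
      mul_left_comm, mul_assoc]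
    exact congrArg (fun rs => _ * (_ * (Matrix.of rs).det))
      (Fin.comp_snoc (liftRow N (k + 1) lam f y) x z)
  · have hminor : (Matrix.of fun i l => rows i ((⟨k, by omega⟩ : Fin (N + k + 1)).succAbove l)) =
        Matrix.of fun i => liftRow N k lam f (Fin.init y) (x i) :=
      funext fun i => liftRow_comp_succAbove lam f y (x i)
    have hsign : (-1 : ℂ) ^ N * (-1) ^ (N + k + k) = 1 := by
      rw [← pow_add, show N + (N + k + k) = 2 * (N + k) by ring, pow_mul]
      norm_num
    rw [snocPrefactor_last x y hyinj hyx, schurLiftF_eq_schurPrefactor_mul_det, hminor]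
    linear_combination (schurPrefactor N k x (Fin.init y) *
      (Matrix.of fun i => liftRow N k lam f (Fin.init y) (x i)).det) * hsign.symm

/-- Cancellation property for the lifts `s_{λ,f}`: if
`(x - y_k)·f(x, y_k) → 1` as `x → y_k` and `x ↦ f(x, y_j)` is continuous at `y_k` for
`j < k`, then in the punctured limit `x_{N+k} → y_k` the quantity
`s_{λ,f}(x₁, …, x_{N+k-1}, x_{N+k} / y₁, …, y_k)` converges to
`s_{λ,f}(x₁, …, x_{N+k-1} / y₁, …, y_{k-1})` (which, for `k = 1`, is the rational Schur
function `s_λ(x₁, …, x_N)`).  Here the number of dual variables is `k + 1 ≥ 1`. -/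
theorem statement2 (N k : ℕ) (hN : 1 ≤ N) (lam : Fin N → ℤ) (hlam : Antitone lam)
    (f : ℂ → ℂ → ℂ) (x : Fin (N + k) → ℂ) (y : Fin (k + 1) → ℂ)
    (hxinj : Function.Injective x) (hx0 : ∀ i, x i ≠ 0)
    (hyinj : Function.Injective y) (hyk0 : y (Fin.last k) ≠ 0)
    (hyx : ∀ i, y (Fin.last k) ≠ x i)
    (hf1 : Tendsto (fun z : ℂ => (z - y (Fin.last k)) * f z (y (Fin.last k)))
      (𝓝[≠] (y (Fin.last k))) (𝓝 1))
    (hf2 : ∀ j : Fin k, ContinuousAt (fun z : ℂ => f z (y j.castSucc)) (y (Fin.last k))) :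
    Tendsto (fun z : ℂ => schurLiftF N (k + 1) lam f (Fin.snoc x z) y)
      (𝓝[≠] (y (Fin.last k))) (𝓝 (schurLiftF N k lam f x (Fin.init y))) :=
  statement2_general N k lam f x y hxinj hyinj hyk0 hyx hf1 hf2
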